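/- A k-dimensional linear subspace of R^n intersects at most 2^k * binomial(n, k) different closed orthants of R^n. -/
import Mathlib

open Module

/-- Bound function: `B 0 k = 1`, `B (n+1) k = 2 * ∑_{j<k} C(n,j)`. -/
def OrthB : ℕ → ℕ → ℕ
  | 0, _ => 1
  | n+1, k => 2 * ∑ j ∈ Finset.range k, Nat.choose n j

/-- Set of strict sign patterns realized by `D`. -/
def SP (n : ℕ) (D : Submodule ℝ (Fin n → ℝ)) : Set (Fin n → ℝ) :=
  {s | (∀ i, s i = 1 ∨ s i = -1) ∧ ∃ x ∈ (D : Set (Fin n → ℝ)), ∀ i, 0 < s i * x i}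

lemma signs_finite (n : ℕ) : {s : Fin n → ℝ | ∀ i, s i = 1 ∨ s i = -1}.Finite := by
  apply Set.Finite.subset
    (Set.Finite.pi (t := fun _ : Fin n => ({1, -1} : Set ℝ))
      (fun _ => (Set.finite_singleton (-1:ℝ)).insert 1))
  intro s hs
  rw [Set.mem_pi]
  intro i _
  rcases hs i with h | h <;> simp [h]

lemma SP_finite (n : ℕ) (D : Submodule ℝ (Fin n → ℝ)) : (SP n D).Finite :=
  (signs_finite n).subset fun _ hs => hs.1

lemma choose_sum_succ (n m : ℕ) :
    ∑ j ∈ Finset.range (m+1), Nat.choose (n+1) j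
      = ∑ j ∈ Finset.range (m+1), Nat.choose n j + ∑ j ∈ Finset.range m, Nat.choose n j := by
  induction m with
  | zero => simp
  | succ m ih =>
    rw [Finset.sum_range_succ, ih,
      Finset.sum_range_succ (f := fun j => Nat.choose n j) (n := m+1),
      Finset.sum_range_succ (f := fun j => Nat.choose n j) (n := m),
      Nat.choose_succ_succ]
    ring

lemma OrthB_succ (n m : ℕ) : OrthB (n+2) (m+1) = OrthB (n+1) (m+1) + OrthB (n+1) m := by
  show 2 * _ = 2 * _ + 2 * _
  rw [choose_sum_succ]
  ring

lemma OrthB_mono (n : ℕ) {k k' : ℕ} (h : k ≤ k') : OrthB n k ≤ OrthB n k' := by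
  cases n with
  | zero => exact le_refl _
  | succ n =>
    exact Nat.mul_le_mul_left _ (Finset.sum_le_sum_of_subset (Finset.range_subset_range.2 h))

lemma OrthB_rec (n m : ℕ) : OrthB n (m+1) + OrthB n m ≤ OrthB (n+1) (m+1) := by
  cases n with
  | zero =>
    show 1 + 1 ≤ 2 * ∑ j ∈ Finset.range (m+1), Nat.choose 0 j
    have h1 : 1 ≤ ∑ j ∈ Finset.range (m+1), Nat.choose 0 j := by
      calc 1 = Nat.choose 0 0 := rfl
        _ ≤ _ := Finset.single_le_sum (f := fun j => Nat.choose 0 j)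
            (fun _ _ => Nat.zero_le _) (Finset.mem_range.2 (Nat.succ_pos m))
    omega
  | succ n => rw [OrthB_succ]

lemma OrthB_le (n : ℕ) : ∀ k, k ≤ n → OrthB n k ≤ 2 ^ k * Nat.choose n k := by
  induction n with
  | zero =>
    intro k hk
    interval_cases k
    simp [OrthB]
  | succ n ih =>
    intro k hk
    match k with
    | 0 => simp [OrthB]
    | m+1 =>
      rcases Nat.lt_or_ge m n with hm | hm
      · cases n with
        | zero => omega
        | succ p =>
          calc OrthB (p+2) (m+1) = OrthB (p+1) (m+1) + OrthB (p+1) m := OrthB_succ p m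
            _ ≤ 2^(m+1) * Nat.choose (p+1) (m+1) + 2^m * Nat.choose (p+1) m :=
                Nat.add_le_add (ih _ (by omega)) (ih _ (by omega))
            _ ≤ 2^(m+1) * Nat.choose (p+1) (m+1) + 2^(m+1) * Nat.choose (p+1) m := by
                have : (2:ℕ)^m ≤ 2^(m+1) := Nat.pow_le_pow_right (by norm_num) (Nat.le_succ m)
                exact Nat.add_le_add_left (Nat.mul_le_mul_right _ this) _
            _ = 2^(m+1) * Nat.choose (p+2) (m+1) := by
                rw [show (p+2).choose (m+1) = (p+1).choose m + (p+1).choose (m+1) from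
                  Nat.choose_succ_succ _ _]
                ring
      · have hmn : m = n := by omega
        subst hmn
        show 2 * ∑ j ∈ Finset.range (m+1), Nat.choose m j ≤ _
        rw [Nat.sum_range_choose, Nat.choose_self, mul_one, pow_succ]
        ring_nf
        exact le_refl _

/-- drop the last coordinate, as a linear map. -/
def projL (n : ℕ) : (Fin (n+1) → ℝ) →ₗ[ℝ] (Fin n → ℝ) :=
  LinearMap.funLeft ℝ ℝ Fin.castSucc

lemma projL_apply (n : ℕ) (x : Fin (n+1) → ℝ) (i : Fin n) :
    projL n x i = x i.castSucc := rfl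

lemma SP_inj (n : ℕ) (D : Submodule ℝ (Fin n.succ → ℝ)) (c : ℝ) :
    Set.InjOn (⇑(projL n)) {s ∈ SP (n+1) D | s (Fin.last n) = c} := by
  intro s hs s' hs' h
  funext i
  induction i using Fin.lastCases with
  | last => rw [hs.2, hs'.2]
  | cast j =>
    have := congrFun h j
    simpa [projL_apply] using this

lemma SP_img (n : ℕ) (D : Submodule ℝ (Fin n.succ → ℝ)) (c : ℝ) :
    ⇑(projL n) '' {s ∈ SP (n+1) D | s (Fin.last n) = c} ⊆ SP n (D.map (projL n)) := by
  rintro t ⟨s, ⟨⟨hs1, x, hxD, hx⟩, -⟩, rfl⟩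
  refine ⟨fun i => hs1 _, projL n x, Submodule.mem_map_of_mem hxD, fun i => ?_⟩
  simpa [projL_apply] using hx i.castSucc

lemma SP_inter (n : ℕ) (D : Submodule ℝ (Fin n.succ → ℝ)) :
    (⇑(projL n) '' {s ∈ SP (n+1) D | s (Fin.last n) = 1}) ∩
      (⇑(projL n) '' {s ∈ SP (n+1) D | s (Fin.last n) = -1})
      ⊆ SP n ((D ⊓ LinearMap.ker (LinearMap.proj (Fin.last n))).map (projL n)) := by
  rintro t ⟨⟨sp, ⟨⟨hsp1, xp, hxpD, hxp⟩, hsplast⟩, rfl⟩,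
    ⟨sm, ⟨⟨hsm1, xm, hxmD, hxm⟩, hsmlast⟩, hteq⟩⟩
  have ha : 0 < xp (Fin.last n) := by
    have h := hxp (Fin.last n); rw [hsplast, one_mul] at h; exact h
  have hb : xm (Fin.last n) < 0 := by
    have h := hxm (Fin.last n); rw [hsmlast] at h; nlinarith
  set z : Fin (n+1) → ℝ := (-(xm (Fin.last n))) • xp + (xp (Fin.last n)) • xm with hz
  have hzD : z ∈ D := D.add_mem (D.smul_mem _ hxpD) (D.smul_mem _ hxmD)
  have hzlast : z (Fin.last n) = 0 := by
    simp only [hz, Pi.add_apply, Pi.smul_apply, smul_eq_mul]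
    ring
  have hzD0 : z ∈ D ⊓ LinearMap.ker (LinearMap.proj (Fin.last n)) := by
    refine ⟨hzD, ?_⟩
    simpa [LinearMap.mem_ker] using hzlast
  have hspm : ∀ j : Fin n, sp j.castSucc = sm j.castSucc := by
    intro j
    have := congrFun hteq j
    simpa [projL_apply] using this.symm
  refine ⟨fun i => hsp1 _, projL n z, Submodule.mem_map_of_mem hzD0, fun i => ?_⟩
  have h1 := hxp i.castSucc
  have h2 := hxm i.castSucc
  have h3 := hspm i
  rw [h3] at h1
  have hzv : projL n z i = (-(xm (Fin.last n))) * xp i.castSucc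
      + (xp (Fin.last n)) * xm i.castSucc := by
    simp [projL_apply, hz]
  have htv : projL n sp i = sm i.castSucc := by rw [projL_apply]; exact h3
  rw [hzv, htv]
  nlinarith [mul_pos (neg_pos.mpr hb) h1, mul_pos ha h2]

lemma SP_bound : ∀ (n : ℕ) (D : Submodule ℝ (Fin n → ℝ)),
    (SP n D).ncard ≤ OrthB n (finrank ℝ D) := by
  intro n
  induction n with
  | zero =>
    intro D
    show _ ≤ 1
    have h1 : (SP 0 D).ncard ≤ (Set.univ : Set (Fin 0 → ℝ)).ncard :=
      Set.ncard_le_ncard (Set.subset_univ _) Set.finite_univ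
    simpa [Set.ncard_univ] using h1
  | succ n ih =>
    intro D
    by_cases hS : SP (n+1) D = ∅
    · simp [hS]
    · obtain ⟨s₀, hs₀1, x₀, hx₀D, hx₀⟩ := Set.nonempty_iff_ne_empty.2 hS
      have hx₀last : x₀ (Fin.last n) ≠ 0 := by
        intro h
        have := hx₀ (Fin.last n); rw [h, mul_zero] at this; exact lt_irrefl 0 this
      set D0 : Submodule ℝ (Fin (n+1) → ℝ) :=
        D ⊓ LinearMap.ker (LinearMap.proj (Fin.last n)) with hD0def
      have hD0lt : D0 < D := by
        refine lt_of_le_of_ne inf_le_left (fun h => ?_)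
        have hsub : D ≤ LinearMap.ker (LinearMap.proj (Fin.last n)) := h ▸ inf_le_right
        exact hx₀last (by simpa [LinearMap.mem_ker] using hsub hx₀D)
      have hD0rank : finrank ℝ D0 < finrank ℝ D := Submodule.finrank_lt_finrank_of_lt hD0lt
      set d := finrank ℝ D with hd
      obtain ⟨m, hm⟩ : ∃ m, d = m + 1 := ⟨d - 1, by omega⟩
      have hfinS : (SP (n+1) D).Finite := SP_finite _ _
      have hfinSp : ({s ∈ SP (n+1) D | s (Fin.last n) = 1}).Finite :=
        hfinS.subset (fun s hs => hs.1)
      have hfinSm : ({s ∈ SP (n+1) D | s (Fin.last n) = -1}).Finite :=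
        hfinS.subset (fun s hs => hs.1)
      have hcover : SP (n+1) D ⊆
          {s ∈ SP (n+1) D | s (Fin.last n) = 1} ∪ {s ∈ SP (n+1) D | s (Fin.last n) = -1} := by
        intro s hs
        rcases hs.1 (Fin.last n) with h | h
        · exact Or.inl ⟨hs, h⟩
        · exact Or.inr ⟨hs, h⟩
      calc (SP (n+1) D).ncard
          ≤ ({s ∈ SP (n+1) D | s (Fin.last n) = 1}
              ∪ {s ∈ SP (n+1) D | s (Fin.last n) = -1}).ncard :=
            Set.ncard_le_ncard hcover (hfinSp.union hfinSm)
        _ ≤ ({s ∈ SP (n+1) D | s (Fin.last n) = 1}).ncard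
              + ({s ∈ SP (n+1) D | s (Fin.last n) = -1}).ncard := Set.ncard_union_le _ _
        _ = (⇑(projL n) '' {s ∈ SP (n+1) D | s (Fin.last n) = 1}).ncard
              + (⇑(projL n) '' {s ∈ SP (n+1) D | s (Fin.last n) = -1}).ncard := by
            rw [Set.ncard_image_of_injOn (SP_inj n D 1),
                Set.ncard_image_of_injOn (SP_inj n D (-1))]
        _ = ((⇑(projL n) '' {s ∈ SP (n+1) D | s (Fin.last n) = 1})
                ∪ (⇑(projL n) '' {s ∈ SP (n+1) D | s (Fin.last n) = -1})).ncard
              + ((⇑(projL n) '' {s ∈ SP (n+1) D | s (Fin.last n) = 1})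
                ∩ (⇑(projL n) '' {s ∈ SP (n+1) D | s (Fin.last n) = -1})).ncard :=
            (Set.ncard_union_add_ncard_inter _ _ (hfinSp.image _) (hfinSm.image _)).symm
        _ ≤ (SP n (D.map (projL n))).ncard + (SP n (D0.map (projL n))).ncard :=
            Nat.add_le_add
              (Set.ncard_le_ncard (Set.union_subset (SP_img n D 1) (SP_img n D (-1)))
                (SP_finite _ _))
              (Set.ncard_le_ncard (SP_inter n D) (SP_finite _ _))
        _ ≤ OrthB n (finrank ℝ (D.map (projL n))) + OrthB n (finrank ℝ (D0.map (projL n))) :=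
            Nat.add_le_add (ih _) (ih _)
        _ ≤ OrthB n (m+1) + OrthB n m := by
            refine Nat.add_le_add (OrthB_mono n ?_) (OrthB_mono n ?_)
            · exact le_trans (Submodule.finrank_map_le _ _) (by omega)
            · exact le_trans (Submodule.finrank_map_le _ _) (by omega)
        _ ≤ OrthB (n+1) (m+1) := OrthB_rec n m
        _ = OrthB (n+1) d := by rw [hm]

/-- A `k`-dimensional linear subspace of `ℝⁿ` realizes at most `2^k * choose n k`
strict sign patterns, i.e. it meets at most that many open orthants. -/
theorem subspace_orthant_count (n k : ℕ) (D : Submodule ℝ (Fin n → ℝ))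
    (hD : Module.finrank ℝ D = k) :
    {s : Fin n → ℝ | (∀ i, s i = 1 ∨ s i = -1) ∧
      ∃ x ∈ (D : Set (Fin n → ℝ)), ∀ i, 0 < s i * x i}.ncard
      ≤ 2 ^ k * n.choose k := by
  have h1 := SP_bound n D
  rw [hD] at h1
  have h2 : k ≤ n := by
    have h3 := Submodule.finrank_le D
    rw [hD, finrank_pi, Fintype.card_fin] at h3
    exact h3
  exact le_trans h1 (OrthB_le n k h2)
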